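/- arXiv:1803.10743 — 2 statements merged into one kernel-verified Lean document; each statement's English description precedes it below -/
import Mathlib

section
/- Let G be a finite group, H₂ ≤ G with representation (ρ₂, V₂), and K : G → Hom(V₁,V₂). The cross-correlation [K★f](g) = Σ_{g'∈G} K(g⁻¹g') f(g') satisfies the Mackey condition [K★f](gh₂) = ρ₂(h₂⁻¹)[K★f](g) for all f : G → V₁, g ∈ G, h₂ ∈ H₂, if and only if K(h₂ g) = ρ₂(h₂) K(g) for all h₂ ∈ H₂, g ∈ G. -/
open Finset

section CrossCorrelation

variable {k G V₁ V₂ : Type*} [Group G] [Fintype G]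

def crossCorrelation [Semiring k] [AddCommMonoid V₁] [Module k V₁] [AddCommMonoid V₂]
    [Module k V₂] (K : G → (V₁ →ₗ[k] V₂)) (f : G → V₁) (g : G) : V₂ :=
  ∑ g' : G, K (g⁻¹ * g') (f g')

theorem crossCorrelation_single [Semiring k] [AddCommMonoid V₁] [Module k V₁]
    [AddCommMonoid V₂] [Module k V₂] [DecidableEq G] (K : G → (V₁ →ₗ[k] V₂))
    (g₀ : G) (v : V₁) (g : G) :
    crossCorrelation K (Pi.single g₀ v) g = K (g⁻¹ * g₀) v := by
  simp only [crossCorrelation, Pi.single_apply, apply_ite, map_zero, sum_ite_eq',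
    mem_univ, if_true]

variable [CommSemiring k] [AddCommMonoid V₁] [Module k V₁] [AddCommMonoid V₂] [Module k V₂]
  {H : Subgroup G} {ρ : Representation k H V₂} {K : G → (V₁ →ₗ[k] V₂)}

theorem crossCorrelation_mul_of_equivariant
    (hK : ∀ (h : H) (g : G), K (h * g) = ρ h ∘ₗ K g) (f : G → V₁) (g : G) (h : H) :
    crossCorrelation K f (g * h) = ρ h⁻¹ (crossCorrelation K f g) := by
  simp only [crossCorrelation, map_sum]
  refine sum_congr rfl fun g' _ => ?_
  rw [mul_inv_rev, mul_assoc, ← Subgroup.coe_inv, hK]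
  rfl

/-- Evaluating at `1` against the delta function `Pi.single g v` recovers `K g v`. -/
theorem equivariant_of_crossCorrelation_mul
    (hK : ∀ (f : G → V₁) (g : G) (h : H),
      crossCorrelation K f (g * h) = ρ h⁻¹ (crossCorrelation K f g))
    (h : H) (g : G) : K (h * g) = ρ h ∘ₗ K g := by
  classical
  ext v
  simpa [crossCorrelation_single] using hK (Pi.single g v) 1 h⁻¹

end CrossCorrelation

/-- the cross-correlation `[K★f](g) = Σ_{g'} K(g⁻¹g') f(g')` satisfies the
Mackey condition `[K★f](gh₂) = ρ₂(h₂⁻¹)[K★f](g)` for all `f`, `g`, `h₂ ∈ H₂`, iff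
`K(h₂g) = ρ₂(h₂) K(g)` for all `h₂ ∈ H₂`, `g ∈ G`. -/
theorem stmt15 {k G V₁ V₂ : Type*} [Field k] [Group G] [Fintype G]
    [AddCommGroup V₁] [Module k V₁] [AddCommGroup V₂] [Module k V₂]
    (H₂ : Subgroup G) (ρ₂ : Representation k H₂ V₂)
    (K : G → (V₁ →ₗ[k] V₂)) :
    (∀ (f : G → V₁) (g : G) (h₂ : H₂),
        ∑ g' : G, K ((g * (h₂ : G))⁻¹ * g') (f g')
          = ρ₂ h₂⁻¹ (∑ g' : G, K (g⁻¹ * g') (f g')))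
    ↔ (∀ (h₂ : H₂) (g : G), K ((h₂ : G) * g) = (ρ₂ h₂) ∘ₗ K g) :=
  ⟨equivariant_of_crossCorrelation_mul, crossCorrelation_mul_of_equivariant⟩
end

section
/- Let K_G = {κ : G → Hom(V₁,V₂) | κ(h₂ g h₁) = ρ₂(h₂) κ(g) ρ₁(h₁) for all h₁ ∈ H₁, h₂ ∈ H₂, g ∈ G} and K_C = {κ̄ : G/H₁ → Hom(V₁,V₂) | κ̄(h₂ x) = ρ₂(h₂) κ̄(x) ρ₁(h₁(x,h₂))⁻¹ for all h₂ ∈ H₂, x ∈ G/H₁}, where h₁(x,g) = s₁(gx)⁻¹ g s₁(x). Then the maps [Λ_K κ̄](g) = κ̄(gH₁) ρ₁(h₁(g)) and [Λ_K⁻¹ κ](x) = κ(s₁(x)) are mutually inverse linear bijections between K_C and K_G. -/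
/-- The `H₁`-valued cocycle `h₁(x,g) = s₁(gx)⁻¹ g s₁(x)` associated to a section `s₁`. -/
def cocycle {G : Type*} [Group G] {H₁ : Subgroup G} (s₁ : G ⧸ H₁ → G)
    (hmem : ∀ (x : G ⧸ H₁) (g : G), (s₁ (g • x))⁻¹ * g * s₁ x ∈ H₁)
    (x : G ⧸ H₁) (g : G) : H₁ :=
  ⟨(s₁ (g • x))⁻¹ * g * s₁ x, hmem x g⟩

/-- The space `K_G` of bi-equivariant kernels `κ : G → Hom(V₁,V₂)`,
`κ(h₂ g h₁) = ρ₂(h₂) κ(g) ρ₁(h₁)`. -/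
def KGspace {k G V₁ V₂ : Type*} [Field k] [Group G]
    [AddCommGroup V₁] [Module k V₁] [AddCommGroup V₂] [Module k V₂]
    {H₁ H₂ : Subgroup G}
    (ρ₁ : Representation k H₁ V₁) (ρ₂ : Representation k H₂ V₂) :
    Set (G → (V₁ →ₗ[k] V₂)) :=
  {κ | ∀ (h₁ : H₁) (h₂ : H₂) (g : G),
    κ ((h₂ : G) * g * (h₁ : G)) = (ρ₂ h₂) ∘ₗ κ g ∘ₗ (ρ₁ h₁)}

/-- The space `K_C` of left-equivariant kernels `κ̄ : G/H₁ → Hom(V₁,V₂)`,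
`κ̄(h₂ x) = ρ₂(h₂) κ̄(x) ρ₁(h₁(x,h₂))⁻¹`. -/
def KCspace {k G V₁ V₂ : Type*} [Field k] [Group G]
    [AddCommGroup V₁] [Module k V₁] [AddCommGroup V₂] [Module k V₂]
    {H₁ H₂ : Subgroup G}
    (ρ₁ : Representation k H₁ V₁) (ρ₂ : Representation k H₂ V₂)
    (s₁ : G ⧸ H₁ → G)
    (hmem : ∀ (x : G ⧸ H₁) (g : G), (s₁ (g • x))⁻¹ * g * s₁ x ∈ H₁) :
    Set ((G ⧸ H₁) → (V₁ →ₗ[k] V₂)) :=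
  {κ | ∀ (h₂ : H₂) (x : G ⧸ H₁),
    κ ((h₂ : G) • x) = (ρ₂ h₂) ∘ₗ κ x ∘ₗ (ρ₁ (cocycle s₁ hmem x (h₂ : G))⁻¹)}

/-- The map `[Λ_K κ̄](g) = κ̄(gH₁) ρ₁(h₁(g))`, where `h₁(g) = h₁(H₁, g)`. -/
def LamK {k G V₁ V₂ : Type*} [Field k] [Group G]
    [AddCommGroup V₁] [Module k V₁] [AddCommGroup V₂] [Module k V₂]
    {H₁ : Subgroup G} (ρ₁ : Representation k H₁ V₁)
    (s₁ : G ⧸ H₁ → G)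
    (hmem : ∀ (x : G ⧸ H₁) (g : G), (s₁ (g • x))⁻¹ * g * s₁ x ∈ H₁)
    (κ : (G ⧸ H₁) → (V₁ →ₗ[k] V₂)) : G → (V₁ →ₗ[k] V₂) :=
  fun g => (κ (QuotientGroup.mk g)) ∘ₗ (ρ₁ (cocycle s₁ hmem (QuotientGroup.mk 1) g))

/-- The map `[Λ_K⁻¹ κ](x) = κ(s₁(x))`. -/
def LamKinv {k G V₁ V₂ : Type*} [Field k] [Group G]
    [AddCommGroup V₁] [Module k V₁] [AddCommGroup V₂] [Module k V₂]
    {H₁ : Subgroup G} (s₁ : G ⧸ H₁ → G)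
    (κ : G → (V₁ →ₗ[k] V₂)) : (G ⧸ H₁) → (V₁ →ₗ[k] V₂) :=
  fun x => κ (s₁ x)

/-! Everything follows from the cocycle identity `h₁(x, ab) = h₁(bx, a) h₁(x, b)` together with
`g = s₁(gH₁) h₁(g)`: the first turns the `H₂`-equivariance of `κ̄` into the two-sided equivariance
of `Λ_K κ̄`, the second recovers `κ` from its values on the image of `s₁`. -/

open QuotientGroup

section Cocycle

variable {G : Type*} [Group G] {H₁ : Subgroup G} (s₁ : G ⧸ H₁ → G)
  (hmem : ∀ (x : G ⧸ H₁) (g : G), (s₁ (g • x))⁻¹ * g * s₁ x ∈ H₁)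

theorem smul_mk_one (a : G) : a • (mk 1 : G ⧸ H₁) = mk a := by
  rw [MulAction.Quotient.smul_mk, smul_eq_mul, mul_one]

theorem mk_coe_eq_mk_one (h : H₁) : (mk (h : G) : G ⧸ H₁) = mk 1 := by
  rw [← one_mul (h : G), mk_mul_of_mem 1 h.2]

theorem cocycle_mul (x : G ⧸ H₁) (a b : G) :
    cocycle s₁ hmem x (a * b) = cocycle s₁ hmem (b • x) a * cocycle s₁ hmem x b := by
  ext
  simp only [cocycle, Subgroup.coe_mul, mul_smul]
  group

variable {s₁}

theorem cocycle_mk_one_coe (hse : s₁ (mk 1) = 1) (g : G) :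
    (cocycle s₁ hmem (mk 1) g : G) = (s₁ (mk g))⁻¹ * g := by
  change (s₁ (g • mk 1))⁻¹ * g * s₁ (mk 1) = _
  rw [smul_mk_one, hse, mul_one]

theorem cocycle_mk_one_of_mem (hse : s₁ (mk 1) = 1) (h : H₁) :
    cocycle s₁ hmem (mk 1) (h : G) = h := by
  ext
  rw [cocycle_mk_one_coe hmem hse, mk_coe_eq_mk_one, hse, inv_one, one_mul]

theorem cocycle_mk_one_section (hs : ∀ x : G ⧸ H₁, (mk (s₁ x) : G ⧸ H₁) = x)
    (hse : s₁ (mk 1) = 1) (x : G ⧸ H₁) : cocycle s₁ hmem (mk 1) (s₁ x) = 1 := by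
  ext
  rw [cocycle_mk_one_coe hmem hse, hs, inv_mul_cancel, OneMemClass.coe_one]

theorem section_mul_cocycle_mk_one (hse : s₁ (mk 1) = 1) (g : G) :
    s₁ (mk g) * cocycle s₁ hmem (mk 1) g = g := by
  rw [cocycle_mk_one_coe hmem hse, mul_inv_cancel_left]

theorem cocycle_mk_one_mul_mul_of_mem (hse : s₁ (mk 1) = 1) (a g : G) (h : H₁) :
    cocycle s₁ hmem (mk 1) (a * g * h) =
      cocycle s₁ hmem (mk g) a * (cocycle s₁ hmem (mk 1) g * h) := by
  rw [mul_assoc, cocycle_mul, cocycle_mul, smul_mk_one, smul_mk_one, mk_mul_of_mem g h.2,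
    mk_coe_eq_mk_one, cocycle_mk_one_of_mem hmem hse]

end Cocycle

section Kernels

variable {k G V₁ V₂ : Type*} [Field k] [Group G]
  [AddCommGroup V₁] [Module k V₁] [AddCommGroup V₂] [Module k V₂]
  {H₁ H₂ : Subgroup G} {ρ₁ : Representation k H₁ V₁} {ρ₂ : Representation k H₂ V₂}
  {s₁ : G ⧸ H₁ → G} (hmem : ∀ (x : G ⧸ H₁) (g : G), (s₁ (g • x))⁻¹ * g * s₁ x ∈ H₁)

theorem LamK_mem_KGspace (hse : s₁ (mk 1) = 1) {κ : G ⧸ H₁ → V₁ →ₗ[k] V₂}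
    (hκ : κ ∈ KCspace ρ₁ ρ₂ s₁ hmem) : LamK ρ₁ s₁ hmem κ ∈ KGspace ρ₁ ρ₂ := by
  intro h₁ h₂ g
  have hmk : (mk ((h₂ : G) * g * h₁) : G ⧸ H₁) = (h₂ : G) • mk g := mk_mul_of_mem _ h₁.2
  have hρ : ∀ a b : H₁, ρ₁ a ∘ₗ ρ₁ b = ρ₁ (a * b) := fun a b => (map_mul ρ₁ a b).symm
  simp only [LamK]
  rw [hmk, hκ, cocycle_mk_one_mul_mul_of_mem hmem hse]
  simp only [LinearMap.comp_assoc]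
  rw [hρ, hρ, inv_mul_cancel_left]

theorem LamKinv_mem_KCspace {κ : G → V₁ →ₗ[k] V₂} (hκ : κ ∈ KGspace ρ₁ ρ₂) :
    LamKinv s₁ κ ∈ KCspace ρ₁ ρ₂ s₁ hmem := by
  intro h₂ x
  have hfactor : (h₂ : G) * s₁ x * ((cocycle s₁ hmem x h₂)⁻¹ : H₁) = s₁ ((h₂ : G) • x) := by
    simp only [cocycle, InvMemClass.coe_inv]
    group
  simp only [LamKinv]
  rw [← hfactor, hκ]

theorem LamKinv_LamK (hs : ∀ x : G ⧸ H₁, (mk (s₁ x) : G ⧸ H₁) = x) (hse : s₁ (mk 1) = 1)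
    (κ : G ⧸ H₁ → V₁ →ₗ[k] V₂) : LamKinv s₁ (LamK ρ₁ s₁ hmem κ) = κ := by
  funext x
  simp only [LamKinv, LamK]
  rw [hs, cocycle_mk_one_section hmem hs hse, map_one, Module.End.one_eq_id, LinearMap.comp_id]

theorem LamK_LamKinv (hse : s₁ (mk 1) = 1) {κ : G → V₁ →ₗ[k] V₂} (hκ : κ ∈ KGspace ρ₁ ρ₂) :
    LamK ρ₁ s₁ hmem (LamKinv s₁ κ) = κ := by
  funext g
  have hκg := hκ (cocycle s₁ hmem (mk 1) g) 1 (s₁ (mk g))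
  rw [OneMemClass.coe_one, one_mul, section_mul_cocycle_mk_one hmem hse, map_one,
    Module.End.one_eq_id, LinearMap.id_comp] at hκg
  exact hκg.symm

theorem LamK_add (κ κ' : G ⧸ H₁ → V₁ →ₗ[k] V₂) :
    LamK ρ₁ s₁ hmem (κ + κ') = LamK ρ₁ s₁ hmem κ + LamK ρ₁ s₁ hmem κ' :=
  funext fun _ => LinearMap.add_comp _ _ _

theorem LamK_smul (c : k) (κ : G ⧸ H₁ → V₁ →ₗ[k] V₂) :
    LamK ρ₁ s₁ hmem (c • κ) = c • LamK ρ₁ s₁ hmem κ :=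
  funext fun _ => LinearMap.smul_comp _ _ _

end Kernels

/-- `Λ_K` and `Λ_K⁻¹` are mutually inverse linear bijections between the
spaces `K_C` and `K_G`. -/
theorem stmt17 {k G V₁ V₂ : Type*} [Field k] [Group G]
    [AddCommGroup V₁] [Module k V₁] [AddCommGroup V₂] [Module k V₂]
    (H₁ H₂ : Subgroup G)
    (ρ₁ : Representation k H₁ V₁) (ρ₂ : Representation k H₂ V₂)
    (s₁ : G ⧸ H₁ → G)
    (hs : ∀ x : G ⧸ H₁, QuotientGroup.mk (s₁ x) = x)
    (hse : s₁ (QuotientGroup.mk 1) = 1)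
    (hmem : ∀ (x : G ⧸ H₁) (g : G), (s₁ (g • x))⁻¹ * g * s₁ x ∈ H₁) :
    (∀ κ ∈ KCspace ρ₁ ρ₂ s₁ hmem, LamK ρ₁ s₁ hmem κ ∈ KGspace ρ₁ ρ₂)
    ∧ (∀ κ ∈ KGspace ρ₁ ρ₂, LamKinv s₁ κ ∈ KCspace ρ₁ ρ₂ s₁ hmem)
    ∧ (∀ κ : (G ⧸ H₁) → (V₁ →ₗ[k] V₂), LamKinv s₁ (LamK ρ₁ s₁ hmem κ) = κ)
    ∧ (∀ κ ∈ KGspace ρ₁ ρ₂, LamK ρ₁ s₁ hmem (LamKinv s₁ κ) = κ)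
    ∧ (∀ κ κ' : (G ⧸ H₁) → (V₁ →ₗ[k] V₂),
        LamK ρ₁ s₁ hmem (κ + κ') = LamK ρ₁ s₁ hmem κ + LamK ρ₁ s₁ hmem κ')
    ∧ (∀ (c : k) (κ : (G ⧸ H₁) → (V₁ →ₗ[k] V₂)),
        LamK ρ₁ s₁ hmem (c • κ) = c • LamK ρ₁ s₁ hmem κ) :=
  ⟨fun _ hκ => LamK_mem_KGspace hmem hse hκ,
    fun _ hκ => LamKinv_mem_KCspace hmem hκ,
    LamKinv_LamK hmem hs hse,
    fun _ hκ => LamK_LamKinv hmem hse hκ,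
    LamK_add hmem,
    LamK_smul hmem⟩
end
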